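/- arXiv:1806.04289 — 2 statements merged into one kernel-verified Lean document; each statement's English description precedes it below -/
import Mathlib

section
/- For n ≥ 1, the number of rooted labeled trees on vertex set [n+1] whose root is larger than all of its children and whose root has degree exactly s is C(n+1, s+1)·s·n^(n-s-1), for 1 ≤ s ≤ n. -/
/-!
Rooted forests on a finite vertex set `V` with root set `N` are encoded by their parent maps.
Splitting off the children `C ⊆ V \ N` of the roots, a forest is the same as a map `C → N`
together with a forest on `V \ N` rooted at `C`; by induction on `|V|` and an Abel-type binomial
identity this gives Cayley's forest formula `|N| n ^ (n - |N| - 1)` for `n = |V|`.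
A tree rooted at `r` is a forest with the single root `r`, whose neighbours are the children of
the root. So a tree in which `r` has exactly `s` neighbours, all below `r`, amounts to `s` of the
vertices below `r` together with a forest on the other `n` vertices rooted at them, and summing
`C(#{v < r}, s) s n ^ (n - s - 1)` over `r` with the hockey-stick identity gives the formula.
-/

open Finset SimpleGraph

variable {V : Type*}

/-- `g` is the parent map of a rooted forest with root set `N`. -/
structure IsRootedForest (N : Finset V) (g : V → V) : Prop where
  map_root : ∀ v ∈ N, g v = v
  exists_iterate_mem : ∀ v, ∃ k, g^[k] v ∈ N

def parentGraph (g : V → V) : SimpleGraph V := fromRel fun v w => g v = w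

variable {N : Finset V} {g : V → V}

lemma parentGraph_adj {v w : V} : (parentGraph g).Adj v w ↔ v ≠ w ∧ (g v = w ∨ g w = v) :=
  fromRel_adj _ _ _

lemma parentGraph_reachable_apply (v : V) : (parentGraph g).Reachable v (g v) := by
  by_cases h : v = g v
  · rw [← h]
  · exact Adj.reachable (parentGraph_adj.2 ⟨h, Or.inl rfl⟩)

namespace IsRootedForest

lemma mem_of_isPeriodicPt (hg : IsRootedForest N g) {v : V} {k : ℕ} (hk : k ≠ 0)
    (hv : Function.IsPeriodicPt g k v) : v ∈ N := by
  obtain ⟨j, hj⟩ := hg.exists_iterate_mem v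
  have hjk : j ≤ j * k := Nat.le_mul_of_pos_right j (Nat.pos_of_ne_zero hk)
  have hfix : Function.IsFixedPt g (g^[j] v) := hg.map_root _ hj
  rw [← (hv.const_mul j).eq, ← Nat.sub_add_cancel hjk, Function.iterate_add_apply,
    hfix.iterate]
  exact hj

lemma exists_mem_reachable (hg : IsRootedForest N g) (v : V) :
    ∃ u ∈ N, (parentGraph g).Reachable v u := by
  obtain ⟨k, hk⟩ := hg.exists_iterate_mem v
  induction k generalizing v with
  | zero => exact ⟨v, hk, .rfl⟩
  | succ k ih =>
    obtain ⟨u, hu, hreach⟩ := ih (g v) hk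
    exact ⟨u, hu, (parentGraph_reachable_apply v).trans hreach⟩

/-- Once the edge to its parent is deleted, only descendants of `x` are reachable from `x`,
and `g x` is not one since `x` is not periodic. -/
lemma isBridge (hg : IsRootedForest N g) {x : V} (hx : x ≠ g x) :
    (parentGraph g).IsBridge s(x, g x) := by
  rintro ⟨p⟩
  have step : ∀ {a b : V}, ((parentGraph g).deleteEdges {s(x, g x)}).Adj a b →
      (∃ k, g^[k] a = x) → ∃ k, g^[k] b = x := by
    rintro a b ⟨hab, hne⟩ ⟨k, hk⟩
    rcases (parentGraph_adj.1 hab).2 with rfl | rfl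
    · cases k with
      | zero =>
        obtain rfl : a = x := hk
        exact absurd ((fromEdgeSet_adj _).2 ⟨rfl, hab.ne⟩) hne
      | succ k => exact ⟨k, hk⟩
    · exact ⟨k + 1, hk⟩
  have descend : ∀ {a b : V}, ((parentGraph g).deleteEdges {s(x, g x)}).Walk a b →
      (∃ k, g^[k] a = x) → ∃ k, g^[k] b = x := by
    intro a b q
    induction q with
    | nil => exact id
    | cons h _ ih => exact fun ha => ih (step h ha)
  obtain ⟨k, hk⟩ := descend p ⟨0, rfl⟩
  exact hx (hg.map_root x (hg.mem_of_isPeriodicPt k.succ_ne_zero hk)).symm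

lemma isAcyclic (hg : IsRootedForest N g) : (parentGraph g).IsAcyclic := by
  rw [isAcyclic_iff_forall_adj_isBridge]
  rintro v w ⟨hvw, rfl | rfl⟩
  · exact hg.isBridge hvw
  · rw [Sym2.eq_swap]
    exact hg.isBridge hvw.symm

lemma isTree {r : V} (hg : IsRootedForest {r} g) : (parentGraph g).IsTree := by
  have hroot (v : V) : (parentGraph g).Reachable v r := by
    simpa using hg.exists_mem_reachable v
  exact ⟨(connected_iff _).2 ⟨fun u v => (hroot u).trans (hroot v).symm, ⟨r⟩⟩,
    hg.isAcyclic⟩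

end IsRootedForest

lemma isEmpty_rootedForest_empty [Nonempty V] : IsEmpty {g : V → V // IsRootedForest ∅ g} :=
  ⟨fun g => by simpa using g.2.exists_iterate_mem (Classical.arbitrary V)⟩

lemma card_rootedForest_univ [Fintype V] : Nat.card {g : V → V // IsRootedForest univ g} = 1 := by
  have hid (g : {g : V → V // IsRootedForest univ g}) : g.1 = id :=
    funext fun v => g.2.map_root v (mem_univ v)
  exact Nat.card_eq_one_iff_unique.2 ⟨⟨fun g g' => Subtype.ext ((hid g).trans (hid g').symm)⟩,
    ⟨⟨id, fun _ _ => rfl, fun v => ⟨0, mem_univ v⟩⟩⟩⟩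

namespace SimpleGraph.IsTree

variable {T : SimpleGraph V} (hT : T.IsTree) (r : V)

noncomputable def parent (v : V) : V :=
  (hT.connected.exists_walk_length_eq_dist v r).choose.snd

lemma parent_root : hT.parent r r = r :=
  Walk.getVert_of_length_le _ <| by
    rw [(hT.connected.exists_walk_length_eq_dist r r).choose_spec, dist_self]
    exact zero_le_one

variable {r}

lemma adj_parent {v : V} (hv : v ≠ r) : T.Adj v (hT.parent r v) :=
  Walk.adj_snd (Walk.not_nil_of_ne hv)

lemma dist_parent_add_one {v : V} (hv : v ≠ r) : T.dist (hT.parent r v) r + 1 = T.dist v r := by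
  set p := (hT.connected.exists_walk_length_eq_dist v r).choose
  have hp : p.length = T.dist v r := (hT.connected.exists_walk_length_eq_dist v r).choose_spec
  have htail := p.length_tail_add_one (Walk.not_nil_of_ne hv)
  have hle : T.dist (hT.parent r v) r ≤ p.tail.length := dist_le p.tail
  have hadj := hT.dist_eq_dist_add_one_of_adj r (hT.adj_parent hv)
  rw [dist_comm, dist_comm (u := r)] at hadj
  omega

lemma parent_eq_of_adj {x y : V} (h : T.Adj x y) (hd : T.dist x r = T.dist y r + 1) :
    hT.parent r x = y := by
  obtain ⟨q, hq⟩ := hT.connected.exists_walk_length_eq_dist y r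
  have hp := (hT.connected.exists_walk_length_eq_dist x r).choose_spec
  have hcons : (Walk.cons h q).length = T.dist x r := by rw [Walk.length_cons, hq, hd]
  have huniq := (hT.isAcyclic.subsingleton_path x r).elim
    ⟨_, Walk.isPath_of_length_eq_dist _ hp⟩ ⟨_, Walk.isPath_of_length_eq_dist _ hcons⟩
  rw [parent, Subtype.mk.inj huniq]
  exact Walk.snd_cons q h

lemma parent_eq_or_parent_eq_of_adj {x y : V} (h : T.Adj x y) :
    hT.parent r x = y ∨ hT.parent r y = x := by
  rcases hT.dist_eq_dist_add_one_of_adj r h with hd | hd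
  · rw [dist_comm, dist_comm (u := r)] at hd
    exact Or.inl (hT.parent_eq_of_adj h hd)
  · rw [dist_comm, dist_comm (u := r)] at hd
    exact Or.inr (hT.parent_eq_of_adj h.symm hd)

lemma exists_iterate_parent_eq (v : V) : ∃ k, (hT.parent r)^[k] v = r := by
  induction hd : T.dist v r using Nat.strong_induction_on generalizing v with
  | _ d ih =>
    by_cases hv : v = r
    · exact ⟨0, hv⟩
    obtain ⟨k, hk⟩ := ih _ (by have := hT.dist_parent_add_one hv; omega) (hT.parent r v) rfl
    exact ⟨k + 1, by rwa [Function.iterate_succ_apply]⟩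

variable (r)

lemma isRootedForest_parent : IsRootedForest {r} (hT.parent r) where
  map_root v hv := by rw [mem_singleton.1 hv, parent_root]
  exists_iterate_mem v := by simpa using hT.exists_iterate_parent_eq v

lemma parentGraph_parent : parentGraph (hT.parent r) = T := by
  ext x y
  rw [parentGraph_adj]
  refine ⟨fun ⟨hxy, h⟩ => ?_, fun h => ⟨h.ne, hT.parent_eq_or_parent_eq_of_adj h⟩⟩
  rcases h with rfl | rfl
  · exact hT.adj_parent fun hx => hxy (by rw [hx, parent_root])
  · exact (hT.adj_parent fun hy => hxy (by rw [hy, parent_root])).symm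

end SimpleGraph.IsTree

lemma IsRootedForest.parent_isTree {r : V} (hg : IsRootedForest {r} g) :
    hg.isTree.parent r = g := by
  have hr : g r = r := hg.map_root r (mem_singleton_self r)
  funext v
  obtain ⟨k, hk⟩ := hg.exists_iterate_mem v
  induction k generalizing v with
  | zero =>
    obtain rfl : v = r := mem_singleton.1 hk
    rw [IsTree.parent_root, hr]
  | succ k ih =>
    by_cases hv : v = r
    · rw [hv, IsTree.parent_root, hr]
    have hvg : v ≠ g v := fun h =>
      hv (mem_singleton.1 (hg.mem_of_isPeriodicPt one_ne_zero h.symm))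
    have hadj : (parentGraph g).Adj v (g v) := parentGraph_adj.2 ⟨hvg, Or.inl rfl⟩
    refine (hg.isTree.parent_eq_or_parent_eq_of_adj hadj).resolve_right fun h => hv ?_
    rw [ih (g v) hk] at h
    exact mem_singleton.1 (hg.mem_of_isPeriodicPt two_ne_zero h)

noncomputable def treeEquivRootedForest (r : V) :
    {T : SimpleGraph V // T.IsTree} ≃ {g : V → V // IsRootedForest {r} g} where
  toFun T := ⟨T.2.parent r, T.2.isRootedForest_parent r⟩
  invFun g := ⟨parentGraph g.1, g.2.isTree⟩
  left_inv T := Subtype.ext (T.2.parentGraph_parent r)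
  right_inv g := Subtype.ext g.2.parent_isTree

section Decomposition

variable [DecidableEq V]

def restrictParent (N : Finset V) (g : V → V) (w : {v // v ∉ N}) : {v // v ∉ N} :=
  if h : g w ∈ N then w else ⟨g w, h⟩

def extendParent (C : Finset {v // v ∉ N}) (h : C → N) (f : {v // v ∉ N} → {v // v ∉ N})
    (v : V) : V :=
  if hv : v ∈ N then v
  else if hc : ⟨v, hv⟩ ∈ C then h ⟨⟨v, hv⟩, hc⟩
  else f ⟨v, hv⟩

variable {C : Finset {v // v ∉ N}} {h : C → N} {f : {v // v ∉ N} → {v // v ∉ N}}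

lemma extendParent_of_mem {w : {v // v ∉ N}} (hw : w ∈ C) :
    extendParent C h f w = h ⟨w, hw⟩ := by
  simp only [extendParent, dif_neg w.2, dif_pos hw]

lemma extendParent_of_notMem {w : {v // v ∉ N}} (hw : w ∉ C) : extendParent C h f w = f w := by
  simp only [extendParent, dif_neg w.2, dif_neg hw]

lemma IsRootedForest.extend (hf : IsRootedForest C f) :
    IsRootedForest N (extendParent C h f) where
  map_root v hv := dif_pos hv
  exists_iterate_mem v := by
    by_cases hv : v ∈ N
    · exact ⟨0, hv⟩
    have hC (w : {v // v ∉ N}) (hw : w ∈ C) : extendParent C h f w ∈ N := by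
      rw [extendParent_of_mem hw]
      exact (h _).2
    obtain ⟨k, hk⟩ := hf.exists_iterate_mem ⟨v, hv⟩
    induction k generalizing v with
    | zero => exact ⟨1, hC _ hk⟩
    | succ k ih =>
      by_cases hc : ⟨v, hv⟩ ∈ C
      · exact ⟨1, hC _ hc⟩
      obtain ⟨j, hj⟩ := ih (f ⟨v, hv⟩) (f ⟨v, hv⟩).2 hk
      exact ⟨j + 1, by rwa [Function.iterate_succ_apply, extendParent_of_notMem hc]⟩

lemma restrictParent_extendParent (hf : ∀ c ∈ C, f c = c) :
    restrictParent N (extendParent C h f) = f := by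
  funext w
  by_cases hw : w ∈ C
  · rw [restrictParent, dif_pos (by rw [extendParent_of_mem hw]; exact (h _).2), hf w hw]
  · rw [restrictParent, dif_neg (by rw [extendParent_of_notMem hw]; exact (f w).2)]
    exact Subtype.ext (extendParent_of_notMem hw)

variable [Fintype V]

def children (N : Finset V) (g : V → V) : Finset {v // v ∉ N} := {w | g w ∈ N}

lemma mem_children {g : V → V} {w : {v // v ∉ N}} : w ∈ children N g ↔ g w ∈ N := by
  simp [children]

lemma IsRootedForest.restrict {g : V → V} (hg : IsRootedForest N g) :
    IsRootedForest (children N g) (restrictParent N g) where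
  map_root w hw := dif_pos (mem_children.1 hw)
  exists_iterate_mem w := by
    obtain ⟨k, hk⟩ := hg.exists_iterate_mem w
    induction k generalizing w with
    | zero => exact absurd hk w.2
    | succ k ih =>
      by_cases hw : g w ∈ N
      · exact ⟨0, mem_children.2 hw⟩
      obtain ⟨j, hj⟩ := ih ⟨g w, hw⟩ hk
      exact ⟨j + 1, by rwa [Function.iterate_succ_apply, restrictParent, dif_neg hw]⟩

lemma children_extendParent : children N (extendParent C h f) = C := by
  ext w
  rw [mem_children]
  by_cases hw : w ∈ C
  · rw [extendParent_of_mem hw]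
    exact iff_of_true (h _).2 hw
  · rw [extendParent_of_notMem hw]
    exact iff_of_false (f w).2 hw

lemma extendParent_restrictParent {g : V → V} (hg : ∀ v ∈ N, g v = v) :
    extendParent (children N g) (fun c => ⟨g c, mem_children.1 c.2⟩) (restrictParent N g) =
      g := by
  funext v
  by_cases hv : v ∈ N
  · exact (dif_pos hv).trans (hg v hv).symm
  by_cases hc : ⟨v, hv⟩ ∈ children N g
  · exact extendParent_of_mem hc
  · rw [extendParent_of_notMem hc, restrictParent, dif_neg (mt mem_children.2 hc)]

def rootedForestChildrenEquiv (C : Finset {v // v ∉ N}) :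
    {g : {g // IsRootedForest N g} // children N g.1 = C} ≃
      (C → N) × {f // IsRootedForest C f} where
  toFun := fun ⟨⟨g, hg⟩, hC⟩ =>
    (fun c => ⟨g c, mem_children.1 (hC ▸ c.2)⟩, ⟨restrictParent N g, hC ▸ hg.restrict⟩)
  invFun p := ⟨⟨extendParent C p.1 p.2.1, p.2.2.extend⟩, children_extendParent⟩
  left_inv := by
    rintro ⟨⟨g, hg⟩, rfl⟩
    exact Subtype.ext (Subtype.ext (extendParent_restrictParent hg.map_root))
  right_inv := by
    rintro ⟨h, f, hf⟩
    exact Prod.ext (funext fun c => Subtype.ext (extendParent_of_mem c.2))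
      (Subtype.ext (restrictParent_extendParent hf.map_root))

theorem card_rootedForest_children_mem (S : Finset (Finset {v // v ∉ N})) :
    Nat.card {g : {g // IsRootedForest N g} // children N g.1 ∈ S} =
      ∑ C ∈ S, #N ^ #C * Nat.card {f // IsRootedForest C f} := by
  rw [← Nat.card_congr (Equiv.sigmaSubtypeFiberEquivSubtype
    (fun g : {g // IsRootedForest N g} => children N g.1) (q := (· ∈ S)) fun _ => Iff.rfl),
    Nat.card_sigma, ← Finset.sum_coe_sort S]
  refine Fintype.sum_congr _ _ fun C => ?_
  rw [Nat.card_congr (rootedForestChildrenEquiv C.1), Nat.card_prod, Nat.card_fun]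
  simp

theorem card_rootedForest_eq_sum :
    Nat.card {g // IsRootedForest N g} =
      ∑ C : Finset {v // v ∉ N}, #N ^ #C * Nat.card {f // IsRootedForest C f} := by
  rw [← card_rootedForest_children_mem, Nat.card_congr (Equiv.subtypeUnivEquiv
    (p := fun g : {g // IsRootedForest N g} => children N g.1 ∈ univ) fun _ => mem_univ _)]

end Decomposition

theorem sum_range_mul_choose_mul_pow_mul_pow {R : Type*} [CommSemiring R] (m : ℕ) (x y : R) :
    ∑ i ∈ range (m + 1), (i * m.choose i : R) * x ^ i * y ^ (m - i) =
      m * x * (x + y) ^ (m - 1) := by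
  cases m with
  | zero => simp
  | succ m =>
    rw [sum_range_succ', add_pow, Nat.add_sub_cancel, mul_sum]
    simp only [Nat.cast_zero, zero_mul, add_zero]
    refine sum_congr rfl fun i _ => ?_
    have hchoose : ((i + 1 : ℕ) : R) * ((m + 1).choose (i + 1) : R) =
        (m + 1 : ℕ) * (m.choose i : R) := by
      exact_mod_cast congrArg (Nat.cast (R := R))
        ((Nat.add_one_mul_choose_eq m i).trans (mul_comm _ _)).symm
    rw [hchoose, Nat.add_sub_add_right]
    push_cast
    ring

lemma sum_finset_pow_card_mul_card_mul_pow {W : Type*} [Fintype W] (k : ℕ) :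
    ∑ C : Finset W, k ^ #C * (#C * Fintype.card W ^ (Fintype.card W - #C)) =
      Fintype.card W * (k * (k + Fintype.card W) ^ (Fintype.card W - 1)) := by
  rw [← powerset_univ, sum_powerset_apply_card
    (fun c => k ^ c * (c * Fintype.card W ^ (Fintype.card W - c))), card_univ]
  have key := sum_range_mul_choose_mul_pow_mul_pow (Fintype.card W) k (Fintype.card W)
  simp only [Nat.cast_id] at key
  rw [← mul_assoc, ← key]
  exact sum_congr rfl fun c _ => by rw [smul_eq_mul]; ring

section ForestFormula

variable [Fintype V] [DecidableEq V]

-- Cayley's forest formula `#N * n ^ (n - #N - 1)`, multiplied by `n = card V` so that it is an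
-- identity in `ℕ` valid for every `N`.
theorem card_rootedForest_mul_card (N : Finset V) :
    Nat.card {g // IsRootedForest N g} * Fintype.card V =
      #N * Fintype.card V ^ (Fintype.card V - #N) := by
  induction hn : Fintype.card V using Nat.strong_induction_on generalizing V with
  | _ n ih =>
  rcases N.eq_empty_or_nonempty with rfl | hN
  · obtain hV | hV := isEmpty_or_nonempty V
    · simp [← hn]
    · have := isEmpty_rootedForest_empty (V := V)
      simp
  have hW : Fintype.card {v // v ∉ N} = n - #N := by
    rw [Fintype.card_subtype_compl, hn, Fintype.card_coe]
  have hkn : #N ≤ n := hn ▸ card_le_univ N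
  have hk : 0 < #N := hN.card_pos
  rcases Nat.eq_zero_or_pos (n - #N) with hm | hm
  · obtain rfl : N = univ := eq_univ_of_card N (by omega)
    rw [card_rootedForest_univ, hm, pow_zero, card_univ, hn]
    omega
  have hsum : Nat.card {g // IsRootedForest N g} * (n - #N) =
      (n - #N) * (#N * n ^ (n - #N - 1)) := by
    calc _ = ∑ C : Finset {v // v ∉ N},
            #N ^ #C * (#C * Fintype.card {v // v ∉ N} ^ (Fintype.card {v // v ∉ N} - #C)) := by
          rw [card_rootedForest_eq_sum, sum_mul]
          refine sum_congr rfl fun C _ => ?_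
          rw [mul_assoc, ← hW, ih _ (by omega) C rfl]
      _ = _ := by rw [sum_finset_pow_card_mul_card_mul_pow, hW, Nat.add_sub_cancel' hkn]
  have hcard : Nat.card {g // IsRootedForest N g} = #N * n ^ (n - #N - 1) :=
    Nat.eq_of_mul_eq_mul_left hm (by rw [mul_comm, hsum])
  rw [hcard, mul_assoc, ← pow_succ, Nat.sub_add_cancel hm]

theorem card_rootedForest (hN : N.Nonempty) :
    (Nat.card {g // IsRootedForest N g} : ℚ) =
      #N * (Fintype.card V : ℚ) ^ ((Fintype.card V : ℤ) - #N - 1) := by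
  have hkn : #N ≤ Fintype.card V := card_le_univ N
  have hn : (Fintype.card V : ℚ) ≠ 0 := Nat.cast_ne_zero.2 (hN.card_pos.trans_le hkn).ne'
  rw [show (Fintype.card V : ℤ) - #N - 1 = ((Fintype.card V - #N : ℕ) : ℤ) - 1 by
    push_cast [Nat.cast_sub hkn]; ring, zpow_sub_one₀ hn, zpow_natCast]
  field_simp
  exact_mod_cast card_rootedForest_mul_card N

end ForestFormula

section Uprooted

variable [Fintype V] [LinearOrder V] {r : V}

lemma IsRootedForest.neighborSet_parentGraph (hg : IsRootedForest {r} g) :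
    (parentGraph g).neighborSet r =
      Subtype.val '' (children {r} g : Set {v // v ∉ ({r} : Finset V)}) := by
  have hr : g r = r := hg.map_root r (mem_singleton_self r)
  ext v
  simp only [mem_neighborSet, parentGraph_adj, hr, Set.mem_image, SetLike.mem_coe, mem_children,
    mem_singleton, Subtype.exists, exists_and_left, exists_prop, exists_eq_right_right]
  tauto

lemma IsRootedForest.uprooted_iff (hg : IsRootedForest {r} g) (s : ℕ) :
    ((∀ v, (parentGraph g).Adj r v → v < r) ∧ ((parentGraph g).neighborSet r).ncard = s) ↔
      children {r} g ∈
        powersetCard s ({w | (w : V) < r} : Finset {v // v ∉ ({r} : Finset V)}) := by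
  rw [mem_powersetCard, hg.neighborSet_parentGraph,
    Set.ncard_image_of_injective _ Subtype.val_injective, Set.ncard_coe_finset]
  simp [← mem_neighborSet, hg.neighborSet_parentGraph, subset_iff]

lemma card_filter_subtype_lt (r : V) :
    #{w : {v // v ∉ ({r} : Finset V)} | (w : V) < r} = #{v | v < r} := by
  rw [← card_map (Function.Embedding.subtype _)]
  congr 1
  ext v
  simpa using ne_of_lt

theorem card_isTree_uprooted {n : ℕ} (hV : Fintype.card V = n + 1) (r : V) {s : ℕ}
    (hs : 1 ≤ s) :
    (Nat.card {T : SimpleGraph V // T.IsTree ∧ (∀ v, T.Adj r v → v < r) ∧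
        (T.neighborSet r).ncard = s} : ℚ) =
      (#{v | v < r}).choose s * (s * (n : ℚ) ^ ((n : ℤ) - s - 1)) := by
  set S := powersetCard s {w : {v // v ∉ ({r} : Finset V)} | (w : V) < r}
  have e : {T : SimpleGraph V // T.IsTree ∧ (∀ v, T.Adj r v → v < r) ∧
      (T.neighborSet r).ncard = s} ≃
        {g : {g // IsRootedForest {r} g} // children {r} g.1 ∈ S} :=
    (Equiv.subtypeSubtypeEquivSubtypeInter _ _).symm.trans
      (Equiv.subtypeEquiv (treeEquivRootedForest r).symm fun g => (g.2.uprooted_iff s).symm).symm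
  have hterm : ∀ C ∈ S,
      ((#({r} : Finset V) ^ #C * Nat.card {f // IsRootedForest C f} : ℕ) : ℚ) =
        s * n ^ ((n : ℤ) - s - 1) := by
    intro C hC
    have hCs := (mem_powersetCard.1 hC).2
    rw [card_singleton, one_pow, one_mul, card_rootedForest (card_pos.1 (by omega)), hCs,
      Fintype.card_subtype_compl, hV, Fintype.card_coe, card_singleton, Nat.add_sub_cancel]
  rw [Nat.card_congr e, card_rootedForest_children_mem, Nat.cast_sum, sum_congr rfl hterm,
    sum_const, card_powersetCard, card_filter_subtype_lt, nsmul_eq_mul]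

end Uprooted

theorem sum_range_choose_eq_choose_add_one (m s : ℕ) :
    ∑ i ∈ range m, i.choose s = m.choose (s + 1) := by
  induction m with
  | zero => simp
  | succ m ih => rw [sum_range_succ, ih, Nat.choose_succ_succ', add_comm]

lemma card_subtype_prod_eq_sum {α β : Type*} [Finite α] [Fintype β] (P : α → β → Prop) :
    Nat.card {x : α × β // P x.1 x.2} = ∑ b, Nat.card {a // P a b} := by
  rw [Nat.card_congr (((Equiv.prodComm α β).subtypeEquiv (p := fun x => P x.1 x.2)
    (q := fun y => P y.2 y.1) fun _ => Iff.rfl).trans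
      (Equiv.subtypeProdEquivSigmaSubtype fun b a => P a b)), Nat.card_sigma]

theorem stmt11_general (n s : ℕ) (hs : 1 ≤ s) :
    (Nat.card {p : SimpleGraph (Fin (n + 1)) × Fin (n + 1) //
        p.1.IsTree ∧ (∀ v : Fin (n + 1), p.1.Adj p.2 v → v < p.2) ∧
        (p.1.neighborSet p.2).ncard = s} : ℚ) =
      (Nat.choose (n + 1) (s + 1) : ℚ) * (s : ℚ) * (n : ℚ) ^ ((n : ℤ) - (s : ℤ) - 1) := by
  have hroot (r : Fin (n + 1)) : #{v | v < r} = r.val := by rw [filter_gt_eq_Iio, Fin.card_Iio]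
  rw [card_subtype_prod_eq_sum fun (T : SimpleGraph (Fin (n + 1))) r =>
      T.IsTree ∧ (∀ v, T.Adj r v → v < r) ∧ (T.neighborSet r).ncard = s, Nat.cast_sum]
  simp_rw [card_isTree_uprooted (Fintype.card_fin _) _ hs, hroot]
  rw [← sum_mul, ← Nat.cast_sum, Fin.sum_univ_eq_sum_range (fun i => i.choose s),
    sum_range_choose_eq_choose_add_one, mul_assoc]

/-- The number of uprooted trees on `[n+1]` whose root has degree exactly `s` is
`C(n+1, s+1)·s·n^(n-s-1)` (interpreted in `ℚ`, so the count is `1` when `s = n`). -/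
theorem stmt11 (n s : ℕ) (hn : 1 ≤ n) (hs : 1 ≤ s) (hsn : s ≤ n) :
    (Nat.card {p : SimpleGraph (Fin (n + 1)) × Fin (n + 1) //
        p.1.IsTree ∧ (∀ v : Fin (n + 1), p.1.Adj p.2 v → v < p.2) ∧
        (p.1.neighborSet p.2).ncard = s} : ℚ) =
      (Nat.choose (n + 1) (s + 1) : ℚ) * (s : ℚ) * (n : ℚ) ^ ((n : ℤ) - (s : ℤ) - 1) :=
  stmt11_general n s hs
end

section
/- For n ≥ 2, Σ_{j=0}^{n-2} C(n, j)·(n-1-j)·(n-1)^(j-1)·2^(n-j) = (n+1)^(n-1) + (n-1)^(n-1). -/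
lemma binomQ (m N : ℕ) :
    ∑ k ∈ Finset.range (N+1), (m:ℚ)^k * 2^(N-k) * (N.choose k) = ((m:ℚ)+2)^N :=
  (add_pow (m:ℚ) 2 N).symm

lemma sumB (m : ℕ) :
    ∑ j ∈ Finset.range (m+2), (j:ℚ) * ((m+1).choose j) * ((m:ℚ)^j * 2^(m+1-j))
      = ((m:ℚ)+1) * m * ((m:ℚ)+2)^m := by
  rw [Finset.sum_range_succ']
  simp only [Nat.cast_zero, zero_mul, add_zero]
  have h : ∀ i ∈ Finset.range (m+1),
      ((i+1 : ℕ):ℚ) * ((m+1).choose (i+1)) * ((m:ℚ)^(i+1) * 2^(m+1-(i+1)))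
        = ((m:ℚ)+1) * (m:ℚ) * ((m:ℚ)^i * 2^(m-i) * (m.choose i)) := by
    intro i hi
    have hc : ((m:ℚ) + 1) * (m.choose i) = ((m+1).choose (i+1)) * ((i:ℚ)+1) := by
      have h2 := Nat.add_one_mul_choose_eq m i
      have h3 : ((Nat.succ m * m.choose i : ℕ) : ℚ) = (((m+1).choose (i+1) * (i+1) : ℕ) : ℚ) :=
        congrArg (Nat.cast : ℕ → ℚ) h2
      push_cast at h3
      linarith
    have hsub : m + 1 - (i+1) = m - i := by omega
    rw [hsub, pow_succ]
    push_cast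
    linear_combination (-(m:ℚ)^i * (m:ℚ) * 2^(m-i)) * hc
  rw [Finset.sum_congr rfl h, ← Finset.mul_sum, binomQ]

lemma sumA (m : ℕ) :
    ∑ j ∈ Finset.range (m+2), ((m+1).choose j : ℚ) * ((m:ℚ)^j * 2^(m+1-j))
      = ((m:ℚ)+2)^(m+1) := by
  rw [← binomQ m (m+1)]
  exact Finset.sum_congr rfl (fun j _ => by ring)

lemma key (m : ℕ) :
    ∑ j ∈ Finset.range m, ((m:ℚ) - j) * (((m+1).choose j : ℚ) * ((m:ℚ)^j * 2^(m+1-j)))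
      = (m:ℚ) * ((m:ℚ)+2)^m + (m:ℚ)^(m+1) := by
  have hfull : ∑ j ∈ Finset.range (m+2),
      ((m:ℚ) - j) * (((m+1).choose j : ℚ) * ((m:ℚ)^j * 2^(m+1-j)))
      = (m:ℚ) * ((m:ℚ)+2)^m := by
    have hsplit : ∀ j, ((m:ℚ) - j) * (((m+1).choose j : ℚ) * ((m:ℚ)^j * 2^(m+1-j)))
        = (m:ℚ) * (((m+1).choose j : ℚ) * ((m:ℚ)^j * 2^(m+1-j)))
          - (j:ℚ) * ((m+1).choose j) * ((m:ℚ)^j * 2^(m+1-j)) := by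
      intro j; ring
    rw [Finset.sum_congr rfl (fun j _ => hsplit j), Finset.sum_sub_distrib,
      ← Finset.mul_sum, sumA, sumB, pow_succ]
    ring
  rw [Finset.sum_range_succ, Finset.sum_range_succ] at hfull
  have e1 : ((m:ℚ) - m) * (((m+1).choose m : ℚ) * ((m:ℚ)^m * 2^(m+1-m))) = 0 := by ring
  have e2 : ((m:ℚ) - (m+1:ℕ)) * (((m+1).choose (m+1) : ℚ) * ((m:ℚ)^(m+1) * 2^(m+1-(m+1))))
      = -(m:ℚ)^(m+1) := by
    rw [Nat.choose_self, Nat.sub_self]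
    push_cast; ring
  rw [e1, e2] at hfull
  linarith


/-- The specialization of Yan's count at `k = n-2`:
`Σ_{j=0}^{n-2} C(n,j)·(n-1-j)·(n-1)^(j-1)·2^(n-j) = (n+1)^(n-1) + (n-1)^(n-1)`
(interpreted in `ℚ`, the `j = 0` term being `(n-1)·(n-1)^(-1)·2^n = 2^n`). -/
theorem stmt18 (n : ℕ) (hn : 2 ≤ n) :
    (∑ j ∈ Finset.range (n - 1),
        (Nat.choose n j : ℚ) * ((n - 1 - j : ℕ) : ℚ) *
          ((n - 1 : ℕ) : ℚ) ^ ((j : ℤ) - 1) * (2 : ℚ) ^ (n - j)) =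
      ((n + 1 : ℕ) : ℚ) ^ (n - 1) + ((n - 1 : ℕ) : ℚ) ^ (n - 1) := by
  obtain ⟨m, rfl⟩ : ∃ m, n = m + 1 := ⟨n - 1, by omega⟩
  have hm : 1 ≤ m := by omega
  have hm0 : (m:ℚ) ≠ 0 := by
    have : 0 < m := by omega
    exact_mod_cast this.ne'
  simp only [Nat.add_sub_cancel]
  have hcongr : ∀ j ∈ Finset.range m,
      ((m+1).choose j : ℚ) * ((m - j : ℕ) : ℚ) * (m:ℚ) ^ ((j : ℤ) - 1) * (2:ℚ) ^ (m + 1 - j)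
        = (1/(m:ℚ)) * (((m:ℚ) - j) * (((m+1).choose j : ℚ) * ((m:ℚ)^j * 2^(m+1-j)))) := by
    intro j hj
    have hj' : j ≤ m := le_of_lt (Finset.mem_range.mp hj)
    rw [Nat.cast_sub hj']
    have hz : (m:ℚ) ^ ((j:ℤ) - 1) = (m:ℚ)^j / m := by
      rw [zpow_sub₀ hm0, zpow_natCast, zpow_one]
    rw [hz]
    ring
  rw [Finset.sum_congr rfl hcongr, ← Finset.mul_sum, key, pow_succ]
  push_cast
  field_simp
  ring
end
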